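/- arXiv:2107.09813 — 2 statements merged into one kernel-verified Lean document; each statement's English description precedes it below -/
import Mathlib

section
/- Let A = (ρ_i)_{i∈A} be a totally ordered family in T. Then every polynomial f ∈ K[x] which is not A-stable satisfies deg(f) ≥ deg(ρ_i) for all i ∈ A. -/
open Polynomial

namespace MLV

variable {K : Type*} [Field K] {Λ : Type*} [AddCommGroup Λ] [LinearOrder Λ] [IsOrderedAddMonoid Λ]

/-- A valuation on the field `K` with values in `Λ∞ = WithTop Λ`. -/
structure FieldVal (K : Type*) (Λ : Type*) [Field K] [AddCommGroup Λ] [LinearOrder Λ] [IsOrderedAddMonoid Λ] where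
  v : K → WithTop Λ
  map_one' : v 1 = 0
  map_zero' : v 0 = ⊤
  ne_top' : ∀ a : K, a ≠ 0 → v a ≠ ⊤
  map_mul' : ∀ a b : K, v (a * b) = v a + v b
  map_add' : ∀ a b : K, min (v a) (v b) ≤ v (a + b)

/-- `μ` is a node of the tree `T = T(Λ)`: a valuation on `K[x]` with values in `Λ∞`
whose restriction to `K` is `v`. -/
def IsValT (v : FieldVal K Λ) (μ : Polynomial K → WithTop Λ) : Prop :=
  μ 1 = 0 ∧ μ 0 = ⊤ ∧ (∀ f g : Polynomial K, μ (f * g) = μ f + μ g) ∧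
    (∀ f g : Polynomial K, min (μ f) (μ g) ≤ μ (f + g)) ∧
    ∀ a : K, μ (C a) = v.v a

/-- `g ∼_μ h` : `μ(g - h) > μ(g)`. -/
def MuEquiv (μ : Polynomial K → WithTop Λ) (g h : Polynomial K) : Prop :=
  μ g < μ (g - h)

/-- `h ∣_μ g` : `g ∼_μ f * h` for some `f`. -/
def MuDvd (μ : Polynomial K → WithTop Λ) (h g : Polynomial K) : Prop :=
  ∃ f : Polynomial K, MuEquiv μ g (f * h)

/-- `g ∈ K[x] \ K` is `μ`-minimal if it `μ`-divides no nonzero polynomial of smaller degree. -/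
def IsMuMinimal (μ : Polynomial K → WithTop Λ) (g : Polynomial K) : Prop :=
  0 < g.natDegree ∧
    ∀ f : Polynomial K, f ≠ 0 → f.degree < g.degree → ¬ MuDvd μ g f

/-- `g` is `μ`-irreducible. -/
def IsMuIrreducible (μ : Polynomial K → WithTop Λ) (g : Polynomial K) : Prop :=
  μ g ≠ ⊤ ∧ (¬ ∃ f : Polynomial K, MuEquiv μ (f * g) 1) ∧
    ∀ f h : Polynomial K, MuDvd μ g (f * h) → MuDvd μ g f ∨ MuDvd μ g h

/-- A (Maclane-Vaquié) key polynomial for `μ`. -/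
def IsKeyPol (μ : Polynomial K → WithTop Λ) (φ : Polynomial K) : Prop :=
  φ.Monic ∧ IsMuMinimal μ φ ∧ IsMuIrreducible μ φ

/-- An inner node: a valuation admitting key polynomials. -/
def IsInnerNode (μ : Polynomial K → WithTop Λ) : Prop :=
  ∃ φ : Polynomial K, IsKeyPol μ φ

/-- `deg(μ)`: the minimal degree of a key polynomial for `μ`. -/
noncomputable def degOf (μ : Polynomial K → WithTop Λ) : ℕ :=
  sInf {n : ℕ | ∃ φ : Polynomial K, IsKeyPol μ φ ∧ φ.natDegree = n}

/-- A key polynomial of minimal degree. -/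
def IsMinKeyPol (μ : Polynomial K → WithTop Λ) (φ : Polynomial K) : Prop :=
  IsKeyPol μ φ ∧ ∀ ψ : Polynomial K, IsKeyPol μ ψ → φ.natDegree ≤ ψ.natDegree

/-- the class `[φ]_μ` of key polynomials `μ`-equivalent to `φ`. -/
def KeyPolClass (μ : Polynomial K → WithTop Λ) (φ : Polynomial K) : Set (Polynomial K) :=
  {ψ : Polynomial K | IsKeyPol μ ψ ∧ MuEquiv μ ψ φ}

/-- The coefficient `a_s` of the `φ`-expansion `f = Σ_s a_s φ^s` (for `φ` monic nonconstant). -/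
noncomputable def expCoeff (φ f : Polynomial K) (s : ℕ) : Polynomial K :=
  (f /ₘ φ ^ s) %ₘ φ

/-- The augmented valuation `[μ; φ, γ]`, acting on `φ`-expansions by
`ν(Σ_s a_s φ^s) = min_s (μ(a_s) + s γ)`. -/
noncomputable def augVal (μ : Polynomial K → WithTop Λ) (φ : Polynomial K)
    (γ : WithTop Λ) (f : Polynomial K) : WithTop Λ :=
  (Finset.range (f.natDegree + 1)).inf'
    (Finset.nonempty_range_iff.mpr (Nat.succ_ne_zero _))
    fun s => μ (expCoeff φ f s) + s • γ

/-- The depth-zero valuation `ω_{a,δ}`, acting on `(x-a)`-expansions by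
`ω(Σ_s a_s (x-a)^s) = min_s (v(a_s) + s δ)`. -/
noncomputable def omegaVal (v : FieldVal K Λ) (a : K) (δ : WithTop Λ)
    (f : Polynomial K) : WithTop Λ :=
  (Finset.range (f.natDegree + 1)).inf'
    (Finset.nonempty_range_iff.mpr (Nat.succ_ne_zero _))
    fun s => v.v ((taylor a f).coeff s) + s • δ

/-- The tangent direction `t(μ,ν)`: monic polynomials of minimal degree with `μ(φ) < ν(φ)`. -/
def TangentDir (μ ν : Polynomial K → WithTop Λ) : Set (Polynomial K) :=
  {φ : Polynomial K | φ.Monic ∧ μ φ < ν φ ∧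
    ∀ ψ : Polynomial K, ψ.Monic → μ ψ < ν ψ → φ.natDegree ≤ ψ.natDegree}

/-- The set of finite values of `μ`. -/
def valSet (μ : Polynomial K → WithTop Λ) : Set Λ :=
  {γ : Λ | ∃ f : Polynomial K, μ f = (γ : WithTop Λ)}

/-- The value group `Γ_μ`. -/
def valGroup (μ : Polynomial K → WithTop Λ) : AddSubgroup Λ :=
  AddSubgroup.closure (valSet μ)

/-- `Γ = v(K^*)` as a subset of `Λ`. -/
def gammaSet (v : FieldVal K Λ) : Set Λ :=
  {γ : Λ | ∃ a : K, v.v a = (γ : WithTop Λ)}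

/-- The value group `Γ` of the base field valuation. -/
def baseGroup (v : FieldVal K Λ) : AddSubgroup Λ :=
  AddSubgroup.closure (gammaSet v)

/-- `μ` is commensurable over `v` : `Γ_μ/Γ` is torsion. -/
def IsCommensurable (v : FieldVal K Λ) (μ : Polynomial K → WithTop Λ) : Prop :=
  ∀ γ : Λ, γ ∈ valGroup μ → ∃ n : ℕ, 0 < n ∧ n • γ ∈ baseGroup v

/-- `Γ_μ^0 = {μ(a) : a ∈ K[x], 0 ≤ deg(a) < deg(μ)}`. -/
noncomputable def degZeroSet (μ : Polynomial K → WithTop Λ) : Set Λ :=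
  {δ : Λ | ∃ a : Polynomial K, a ≠ 0 ∧ a.natDegree < degOf μ ∧ μ a = (δ : WithTop Λ)}

/-- Equivalence of valuations: an order-preserving isomorphism `ι : Γ_μ → Γ_ν`
with `ν = ι ∘ μ`. -/
def ValEquiv (μ ν : Polynomial K → WithTop Λ) : Prop :=
  ∃ ι : valGroup μ ≃+ valGroup ν,
    Monotone ι ∧ (∀ f : Polynomial K, μ f = ⊤ ↔ ν f = ⊤) ∧
    ∀ (f : Polynomial K) (γ : Λ) (h : μ f = (γ : WithTop Λ)),
      ν f = ((ι ⟨γ, AddSubgroup.subset_closure ⟨f, h⟩⟩ : Λ) : WithTop Λ)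

/-- `β ∼_sme γ` : an order-preserving isomorphism `⟨Γ,β⟩ → ⟨Γ,γ⟩` fixing `Γ`
and mapping `β` to `γ`. -/
def SmeEquiv (v : FieldVal K Λ) (β γ : Λ) : Prop :=
  ∃ ι : (AddSubgroup.closure (gammaSet v ∪ {β}) : AddSubgroup Λ) ≃+
      (AddSubgroup.closure (gammaSet v ∪ {γ}) : AddSubgroup Λ),
    Monotone ι ∧
    (∀ (a : Λ) (ha : a ∈ gammaSet v),
      ((ι ⟨a, AddSubgroup.subset_closure (Set.mem_union_left _ ha)⟩ : Λ) = a)) ∧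
    ((ι ⟨β, AddSubgroup.subset_closure (Set.mem_union_right _ rfl)⟩ : Λ) = γ)

section Families

variable {ι : Type*} [LinearOrder ι]

/-- A totally ordered family of inner nodes of `T`, indexed order-isomorphically by a
totally ordered set, containing no maximal element. -/
def IsTOFamily (v : FieldVal K Λ) (ρ : ι → Polynomial K → WithTop Λ) : Prop :=
  (∀ i, IsValT v (ρ i)) ∧ (∀ i, IsInnerNode (ρ i)) ∧ StrictMono ρ ∧
    ∀ i : ι, ∃ j : ι, i < j

/-- `f` is `A`-stable: the values `ρ_i(f)` are eventually constant. -/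
def IsStablePoly (ρ : ι → Polynomial K → WithTop Λ) (f : Polynomial K) : Prop :=
  ∃ i : ι, ∀ j : ι, i ≤ j → ρ j f = ρ i f

/-- `β` is the stable value `ρ_A(f)`. -/
def IsStableVal (ρ : ι → Polynomial K → WithTop Λ) (f : Polynomial K)
    (β : WithTop Λ) : Prop :=
  ∃ i : ι, ∀ j : ι, i ≤ j → ρ j f = β

open Classical in
/-- The stability function `ρ_A` (junk value `⊤` on unstable polynomials). -/
noncomputable def stableVal (ρ : ι → Polynomial K → WithTop Λ) (f : Polynomial K) :
    WithTop Λ :=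
  if h : ∃ β : WithTop Λ, IsStableVal ρ f β then h.choose else ⊤

/-- The family has stable degree `m`. -/
def HasStableDeg (ρ : ι → Polynomial K → WithTop Λ) (m : ℕ) : Prop :=
  ∃ i : ι, ∀ j : ι, i ≤ j → degOf (ρ j) = m

/-- A continuous family: a totally ordered family of eventually constant degree. -/
def IsContFamily (v : FieldVal K Λ) (ρ : ι → Polynomial K → WithTop Λ) : Prop :=
  IsTOFamily v ρ ∧ ∃ m : ℕ, HasStableDeg ρ m

/-- The stable group `Γ_C`: stable values of nonzero stable polynomials. -/
def stableSet (ρ : ι → Polynomial K → WithTop Λ) : Set Λ :=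
  {δ : Λ | ∃ f : Polynomial K, f ≠ 0 ∧ IsStableVal ρ f (δ : WithTop Λ)}

/-- A limit key polynomial: monic, unstable, of minimal degree among unstable polynomials. -/
def IsLimKeyPol (ρ : ι → Polynomial K → WithTop Λ) (φ : Polynomial K) : Prop :=
  φ.Monic ∧ ¬ IsStablePoly ρ φ ∧
    ∀ f : Polynomial K, ¬ IsStablePoly ρ f → φ.natDegree ≤ f.natDegree

/-- An essential continuous family: `m(C) < m_∞(C) < ∞`. -/
def IsEssential (v : FieldVal K Λ) (ρ : ι → Polynomial K → WithTop Λ) : Prop :=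
  IsTOFamily v ρ ∧
    ∃ m : ℕ, HasStableDeg ρ m ∧
      ∃ φ : Polynomial K, IsLimKeyPol ρ φ ∧ m < φ.natDegree

/-- The limit augmentation `[C; φ, γ]`, acting on `φ`-expansions by
`ν(Σ_s a_s φ^s) = min_s (ρ_C(a_s) + s γ)`. -/
noncomputable def limAugVal (ρ : ι → Polynomial K → WithTop Λ) (φ : Polynomial K)
    (γ : WithTop Λ) (f : Polynomial K) : WithTop Λ :=
  (Finset.range (f.natDegree + 1)).inf'
    (Finset.nonempty_range_iff.mpr (Nat.succ_ne_zero _))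
    fun s => stableVal ρ (expCoeff φ f s) + s • γ

/-- Equivalence of totally ordered families: mutual cofinality. -/
def FamEquiv {κ : Type*} [LinearOrder κ] (ρ : ι → Polynomial K → WithTop Λ)
    (σ : κ → Polynomial K → WithTop Λ) : Prop :=
  (∀ i : ι, ∃ j : κ, ρ i ≤ σ j) ∧ ∀ j : κ, ∃ i : ι, σ j ≤ ρ i

end Families

end MLV

/-! If `μ ≤ ν` in `T` and `μ f < ν f`, take a monic `φ` of minimal degree with `μ φ < ν φ`.
Then `μ` and `ν` agree in degrees `< deg φ`, so division with remainder by `φ` shows that `φ`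
`μ`-divides exactly the polynomials `g` with `μ g < ν g`. This set is prime and excludes `1`,
so `φ` is `μ`-irreducible, and it contains no nonzero polynomial of degree `< deg φ`, so `φ` is
`μ`-minimal. Hence `deg μ ≤ deg φ ≤ deg f`, and for an unstable `f` and any `i` there is
`j ≥ i` with `ρ_i f < ρ_j f`. -/

namespace MLV

variable {K : Type*} [Field K] {Λ : Type*} [AddCommGroup Λ] [LinearOrder Λ] [IsOrderedAddMonoid Λ]
  {v : FieldVal K Λ} {μ ν : Polynomial K → WithTop Λ}

namespace IsValT

noncomputable def toAddValuation (hμ : IsValT v μ) : AddValuation K[X] (WithTop Λ) :=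
  AddValuation.of μ hμ.2.1 hμ.1 hμ.2.2.2.1 hμ.2.2.1

lemma map_one (hμ : IsValT v μ) : μ 1 = 0 := hμ.1

lemma map_zero (hμ : IsValT v μ) : μ 0 = ⊤ := hμ.2.1

lemma map_mul (hμ : IsValT v μ) (f g : K[X]) : μ (f * g) = μ f + μ g := hμ.2.2.1 f g

lemma min_le_map_add (hμ : IsValT v μ) (f g : K[X]) : min (μ f) (μ g) ≤ μ (f + g) :=
  hμ.2.2.2.1 f g

lemma map_C (hμ : IsValT v μ) (a : K) : μ (C a) = v.v a := hμ.2.2.2.2 a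

lemma map_add_eq_of_lt_left (hμ : IsValT v μ) {f g : K[X]} (h : μ f < μ g) :
    μ (f + g) = μ f :=
  hμ.toAddValuation.map_add_eq_of_lt_left h

lemma map_sub_eq_of_lt_right (hμ : IsValT v μ) {f g : K[X]} (h : μ g < μ f) :
    μ (f - g) = μ g :=
  hμ.toAddValuation.map_sub_eq_of_lt_right h

lemma map_sub_swap (hμ : IsValT v μ) (f g : K[X]) : μ (f - g) = μ (g - f) :=
  hμ.toAddValuation.map_sub_swap f g

lemma map_eq_of_muEquiv (hμ : IsValT v μ) {g h : K[X]} (hgh : MuEquiv μ g h) : μ h = μ g :=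
  hμ.toAddValuation.map_eq_of_lt_sub (show μ g < μ (h - g) by rwa [hμ.map_sub_swap])

lemma muEquiv_symm (hμ : IsValT v μ) {g h : K[X]} (hgh : MuEquiv μ g h) : MuEquiv μ h g := by
  rw [MuEquiv, hμ.map_eq_of_muEquiv hgh, hμ.map_sub_swap]
  exact hgh

end IsValT

lemma map_eq_of_map_mul_C_eq (hμ : IsValT v μ) (hν : IsValT v ν) {h : K[X]} {c : K} (hc : c ≠ 0)
    (heq : μ (h * C c) = ν (h * C c)) : μ h = ν h := by
  have hh : h = h * C c * C c⁻¹ := by rw [mul_assoc, ← C_mul, mul_inv_cancel₀ hc, C_1, mul_one]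
  rw [hh, hμ.map_mul, hν.map_mul, heq, hμ.map_C, hν.map_C]

lemma exists_monic_lt_of_lt (hμ : IsValT v μ) (hν : IsValT v ν) (hle : μ ≤ ν) {f : K[X]}
    (hf : μ f < ν f) : ∃ g : K[X], g.Monic ∧ g.natDegree = f.natDegree ∧ μ g < ν g := by
  have hf0 : f ≠ 0 := by
    rintro rfl
    rw [hμ.map_zero, hν.map_zero] at hf
    exact lt_irrefl _ hf
  have hlc : f.leadingCoeff⁻¹ ≠ 0 := inv_ne_zero (leadingCoeff_ne_zero.mpr hf0)
  refine ⟨f * C f.leadingCoeff⁻¹, monic_mul_leadingCoeff_inv hf0, natDegree_mul_C hlc, ?_⟩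
  refine (hle _).lt_of_ne fun heq => hf.ne ?_
  exact map_eq_of_map_mul_C_eq hμ hν hlc heq

lemma exists_mem_tangentDir_natDegree_le (hμ : IsValT v μ) (hν : IsValT v ν) (hle : μ ≤ ν)
    {f : K[X]} (hf : μ f < ν f) : ∃ φ ∈ TangentDir μ ν, φ.natDegree ≤ f.natDegree := by
  classical
  have hex : ∃ n, ∃ g : K[X], g.Monic ∧ μ g < ν g ∧ g.natDegree = n := by
    obtain ⟨g, hgm, hgd, hg⟩ := exists_monic_lt_of_lt hμ hν hle hf
    exact ⟨_, g, hgm, hg, hgd⟩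
  obtain ⟨φ, hφm, hφ, hφd⟩ := Nat.find_spec hex
  refine ⟨φ, ⟨hφm, hφ, fun ψ hψm hψ => hφd ▸ Nat.find_min' hex ⟨ψ, hψm, hψ, rfl⟩⟩, ?_⟩
  obtain ⟨g, hgm, hgd, hg⟩ := exists_monic_lt_of_lt hμ hν hle hf
  exact hφd ▸ hgd ▸ Nat.find_min' hex ⟨g, hgm, hg, rfl⟩

lemma ne_one_of_mem_tangentDir (hμ : IsValT v μ) (hν : IsValT v ν) {φ : K[X]}
    (hφ : φ ∈ TangentDir μ ν) : φ ≠ 1 := by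
  rintro rfl
  exact hφ.2.1.ne (by rw [hμ.map_one, hν.map_one])

lemma map_eq_of_natDegree_lt_of_mem_tangentDir (hμ : IsValT v μ) (hν : IsValT v ν)
    (hle : μ ≤ ν) {φ g : K[X]} (hφ : φ ∈ TangentDir μ ν) (hg : g.natDegree < φ.natDegree) :
    μ g = ν g := by
  by_cases hg0 : g = 0
  · rw [hg0, hμ.map_zero, hν.map_zero]
  refine (hle g).eq_of_not_lt fun hlt => ?_
  obtain ⟨g', hg'm, hg'd, hg'⟩ := exists_monic_lt_of_lt hμ hν hle hlt
  exact (hφ.2.2 g' hg'm hg').not_gt (hg'd ▸ hg)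

lemma map_lt_of_muDvd (hμ : IsValT v μ) (hν : IsValT v ν) (hle : μ ≤ ν) {φ g : K[X]}
    (hφ : μ φ < ν φ) (hdvd : MuDvd μ φ g) : μ g < ν g := by
  obtain ⟨q, hq⟩ := hdvd
  have hqφ : μ (q * φ) = μ g := hμ.map_eq_of_muEquiv hq
  have hq_top : μ q ≠ ⊤ := by
    have := ne_top_of_lt hq
    rw [← hqφ, hμ.map_mul, WithTop.add_ne_top] at this
    exact this.1
  have hlt_qφ : μ g < ν (q * φ) := by
    rw [← hqφ, hμ.map_mul, hν.map_mul]
    exact WithTop.add_lt_add_of_le_of_lt hq_top (hle q) hφ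
  have hlt_rest : μ g < ν (g - q * φ) := hq.trans_le (hle _)
  calc μ g < min (ν (g - q * φ)) (ν (q * φ)) := lt_min hlt_rest hlt_qφ
    _ ≤ ν (g - q * φ + q * φ) := hν.min_le_map_add _ _
    _ = ν g := by rw [sub_add_cancel]

lemma muDvd_of_map_lt (hμ : IsValT v μ) (hν : IsValT v ν) (hle : μ ≤ ν) {φ g : K[X]}
    (hφ : φ ∈ TangentDir μ ν) (hg : μ g < ν g) : MuDvd μ φ g := by
  have hφ1 := ne_one_of_mem_tangentDir hμ hν hφ
  set r := g %ₘ φ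
  set q := g /ₘ φ
  have hdecomp : q * φ + r = g := by rw [mul_comm, add_comm]; exact modByMonic_add_div g φ
  have hr : μ r = ν r :=
    map_eq_of_natDegree_lt_of_mem_tangentDir hμ hν hle hφ (natDegree_modByMonic_lt g hφ.1 hφ1)
  refine ⟨q, ?_⟩
  rw [MuEquiv, show g - q * φ = r by rw [← hdecomp]; ring]
  by_contra! hrg
  have hνr : ν r < ν g := (hr ▸ hrg).trans_lt hg
  have hνqφ : ν (q * φ) = ν r := by
    rw [show q * φ = g - r by rw [← hdecomp]; ring, hν.map_sub_eq_of_lt_right hνr]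
  have hq_top : μ q ≠ ⊤ := by
    have := ne_top_of_lt hνr
    rw [← hνqφ, hν.map_mul, WithTop.add_ne_top] at this
    exact ne_top_of_le_ne_top this.1 (hle q)
  have hμqφ : μ (q * φ) < μ r := by
    rw [hμ.map_mul, hr, ← hνqφ, hν.map_mul]
    exact WithTop.add_lt_add_of_le_of_lt hq_top (hle q) hφ.2.1
  have hμg : μ g = μ (q * φ) := by
    rw [← hdecomp, hμ.map_add_eq_of_lt_left hμqφ]
  exact lt_irrefl _ ((hμg ▸ hμqφ).trans_le hrg)

lemma isKeyPol_of_mem_tangentDir (hμ : IsValT v μ) (hν : IsValT v ν) (hle : μ ≤ ν) {φ : K[X]}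
    (hφ : φ ∈ TangentDir μ ν) : IsKeyPol μ φ := by
  have hφ1 := ne_one_of_mem_tangentDir hμ hν hφ
  refine ⟨hφ.1, ⟨?_, ?_⟩, ne_top_of_lt hφ.2.1, ?_, ?_⟩
  · exact Nat.pos_of_ne_zero fun h => hφ1 (hφ.1.natDegree_eq_zero.mp h)
  · intro f hf0 hdeg hdvd
    exact (map_lt_of_muDvd hμ hν hle hφ.2.1 hdvd).ne
      (map_eq_of_natDegree_lt_of_mem_tangentDir hμ hν hle hφ (natDegree_lt_natDegree hf0 hdeg))
  · rintro ⟨q, hq⟩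
    have h1 := map_lt_of_muDvd hμ hν hle hφ.2.1 ⟨q, hμ.muEquiv_symm hq⟩
    rw [hμ.map_one, hν.map_one] at h1
    exact lt_irrefl _ h1
  · intro a b hdvd
    have hab := map_lt_of_muDvd hμ hν hle hφ.2.1 hdvd
    rw [hμ.map_mul, hν.map_mul] at hab
    have hor : μ a < ν a ∨ μ b < ν b := by
      by_contra! h
      exact (add_le_add h.1 h.2).not_gt hab
    exact hor.imp (muDvd_of_map_lt hμ hν hle hφ) (muDvd_of_map_lt hμ hν hle hφ)

lemma degOf_le_natDegree_of_lt (hμ : IsValT v μ) (hν : IsValT v ν) (hle : μ ≤ ν) {f : K[X]}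
    (hf : μ f < ν f) : degOf μ ≤ f.natDegree := by
  obtain ⟨φ, hφ, hφf⟩ := exists_mem_tangentDir_natDegree_le hμ hν hle hf
  have hdeg : degOf μ ≤ φ.natDegree := Nat.sInf_le ⟨φ, isKeyPol_of_mem_tangentDir hμ hν hle hφ, rfl⟩
  exact hdeg.trans hφf

end MLV

open MLV

theorem statement_6_general {K : Type*} [Field K] {Λ : Type*} [AddCommGroup Λ] [LinearOrder Λ] [IsOrderedAddMonoid Λ] {ι : Type*} [LinearOrder ι]
    (v : FieldVal K Λ) (ρ : ι → Polynomial K → WithTop Λ) (hA : IsTOFamily v ρ)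
    (f : Polynomial K) (hf : ¬ IsStablePoly ρ f) :
    ∀ i : ι, degOf (ρ i) ≤ f.natDegree := by
  simp only [IsStablePoly, not_exists, not_forall] at hf
  intro i
  obtain ⟨j, hij, hne⟩ := hf i
  have hle : ρ i ≤ ρ j := hA.2.2.1.monotone hij
  exact degOf_le_natDegree_of_lt (hA.1 i) (hA.1 j) hle ((hle f).lt_of_ne (Ne.symm hne))

/-- Every `A`-unstable polynomial `f` satisfies `deg(f) ≥ deg(ρ_i)` for all `i`. -/
theorem statement_6 {K : Type*} [Field K] {Λ : Type*} [AddCommGroup Λ] [LinearOrder Λ] [IsOrderedAddMonoid Λ] {ι : Type*} [LinearOrder ι] [Nonempty ι]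
    (v : FieldVal K Λ) (ρ : ι → Polynomial K → WithTop Λ) (hA : IsTOFamily v ρ)
    (f : Polynomial K) (hf : ¬ IsStablePoly ρ f) :
    ∀ i : ι, degOf (ρ i) ≤ f.natDegree :=
  statement_6_general v ρ hA f hf
end

section
/- Let C be an essential continuous family in T and let φ ∈ KP_∞(C). Then KP_∞(C) = {φ + a : a ∈ K[x], deg(a) < m_∞(C), and ρ_C(a) > ρ_i(φ) for all i ∈ A}. -/
open Polynomial

open MLV

/-!
Two limit key polynomials are monic of the same degree `m_∞`, so they differ by a polynomial `a`
of degree `< m_∞`, which is therefore stable, with stable value `β`. Since `φ` is not stable, its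
values `ρ_i(φ)` increase cofinally; if they ever reached `β`, they would later exceed it, and from
then on `ρ_i(φ + a) = β`, making `φ + a` stable. Conversely, if `ρ_i(φ) < β` for all `i`, then `ρ_i(φ + a) = ρ_i(φ)`
eventually, so `φ + a` is not stable either.
-/

namespace MLV

variable {K : Type*} [Field K] {Λ : Type*}

section Valuation

variable [AddCommGroup Λ] [LinearOrder Λ] [IsOrderedAddMonoid Λ]

lemma FieldVal.map_neg_one (v : FieldVal K Λ) : v.v (-1) = 0 := by
  have hsq : v.v (-1) + v.v (-1) = 0 := by rw [← v.map_mul', neg_one_mul, neg_neg, v.map_one']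
  lift v.v (-1) to Λ using v.ne_top' _ (neg_ne_zero.2 one_ne_zero) with y
  rw [← WithTop.coe_add, WithTop.coe_eq_zero, ← two_nsmul] at hsq
  exact WithTop.coe_eq_zero.2 ((nsmul_eq_zero_iff_right two_ne_zero).1 hsq)

namespace IsValT

variable {v : FieldVal K Λ} {μ : K[X] → WithTop Λ}

lemma map_neg (hμ : IsValT v μ) (g : K[X]) : μ (-g) = μ g := by
  rw [← neg_one_mul, ← C_1, ← C_neg, hμ.2.2.1, hμ.2.2.2.2, v.map_neg_one, zero_add]

lemma map_add_eq_left_of_lt (hμ : IsValT v μ) {f g : K[X]} (hlt : μ f < μ g) :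
    μ (f + g) = μ f := by
  refine le_antisymm ?_ (min_eq_left hlt.le ▸ hμ.2.2.2.1 f g)
  by_contra! hgt
  have hf := hμ.2.2.2.1 (f + g) (-g)
  rw [add_neg_cancel_right, hμ.map_neg] at hf
  exact hf.not_gt (lt_min hgt hlt)

end IsValT

end Valuation

section Families

variable {ι : Type*} [LinearOrder ι] {ρ : ι → K[X] → WithTop Λ}

lemma IsStableVal.isStablePoly {f : K[X]} {β : WithTop Λ} (h : IsStableVal ρ f β) :
    IsStablePoly ρ f :=
  let ⟨i, hi⟩ := h
  ⟨i, fun j hj => (hi j hj).trans (hi i le_rfl).symm⟩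

lemma IsStableVal.of_eventually_eq {f g : K[X]} {β : WithTop Λ} (h : IsStableVal ρ f β)
    (hfg : ∃ i, ∀ k, i ≤ k → ρ k g = ρ k f) : IsStableVal ρ g β :=
  let ⟨i, hi⟩ := h
  let ⟨j, hj⟩ := hfg
  ⟨max i j, fun k hk => (hj k (le_of_max_le_right hk)).trans (hi k (le_of_max_le_left hk))⟩

lemma exists_lt_of_not_isStablePoly [LinearOrder Λ] (hρ : Monotone ρ) {f : K[X]}
    (hf : ¬ IsStablePoly ρ f) (i : ι) : ∃ j, i ≤ j ∧ ρ i f < ρ j f := by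
  simp only [IsStablePoly, not_exists, not_forall] at hf
  obtain ⟨j, hij, hne⟩ := hf i
  exact ⟨j, hij, (hρ hij f).lt_of_ne' hne⟩

lemma not_isStablePoly_add_iff [AddCommGroup Λ] [LinearOrder Λ] [IsOrderedAddMonoid Λ]
    {v : FieldVal K Λ} (hval : ∀ i, IsValT v (ρ i)) (hρ : Monotone ρ) {φ a : K[X]}
    {β : WithTop Λ} (hφ : ¬ IsStablePoly ρ φ) (ha : IsStableVal ρ a β) : ¬ IsStablePoly ρ (φ + a) ↔ ∀ i, ρ i φ < β := by
  obtain ⟨i₀, hi₀⟩ := ha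
  constructor
  · intro hφa
    by_contra! ⟨i₁, hβ⟩
    obtain ⟨j₁, hij₁, hlt⟩ := exists_lt_of_not_isStablePoly hρ hφ i₁
    refine hφa (IsStableVal.of_eventually_eq ⟨i₀, hi₀⟩ ⟨max i₀ j₁, fun k hk => ?_⟩).isStablePoly
    have hak : ρ k a = β := hi₀ k (le_of_max_le_left hk)
    rw [add_comm, (hval k).map_add_eq_left_of_lt, hak]
    exact hak ▸ hβ.trans_lt (hlt.trans_le (hρ (le_of_max_le_right hk) φ))
  · rintro hlt ⟨i, hi⟩
    have hφa : ∀ k, i₀ ≤ k → ρ k φ = ρ k (φ + a) := fun k hk =>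
      ((hval k).map_add_eq_left_of_lt (hi₀ k hk ▸ hlt k)).symm
    exact hφ (IsStableVal.of_eventually_eq (β := ρ i (φ + a)) ⟨i, hi⟩ ⟨i₀, hφa⟩).isStablePoly

namespace IsLimKeyPol

variable {φ ψ : K[X]}

lemma natDegree_eq (hφ : IsLimKeyPol ρ φ) (hψ : IsLimKeyPol ρ ψ) :
    ψ.natDegree = φ.natDegree :=
  le_antisymm (hψ.2.2 φ hφ.2.1) (hφ.2.2 ψ hψ.2.1)

lemma isStablePoly_of_natDegree_lt (hφ : IsLimKeyPol ρ φ) {f : K[X]}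
    (hf : f.natDegree < φ.natDegree) : IsStablePoly ρ f := by
  by_contra h
  exact (hφ.2.2 f h).not_gt hf

lemma add (hφ : IsLimKeyPol ρ φ) {a : K[X]} (ha : a.natDegree < φ.natDegree)
    (hφa : ¬ IsStablePoly ρ (φ + a)) : IsLimKeyPol ρ (φ + a) :=
  ⟨hφ.1.add_of_left (degree_lt_degree ha), hφa, fun f hf =>
    (natDegree_add_eq_left_of_natDegree_lt ha).symm ▸ hφ.2.2 f hf⟩

end IsLimKeyPol

end Families

end MLV

theorem statement_10_general {K : Type*} [Field K] {Λ : Type*} [AddCommGroup Λ] [LinearOrder Λ] [IsOrderedAddMonoid Λ] {ι : Type*} [LinearOrder ι]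
    (v : FieldVal K Λ) (ρ : ι → Polynomial K → WithTop Λ)
    (hE : IsEssential v ρ) (φ : Polynomial K) (hφ : IsLimKeyPol ρ φ) :
    {ψ : Polynomial K | IsLimKeyPol ρ ψ} =
      {ψ : Polynomial K | ∃ a : Polynomial K, ψ = φ + a ∧ a.natDegree < φ.natDegree ∧
        ∃ β : WithTop Λ, IsStableVal ρ a β ∧ ∀ i : ι, ρ i φ < β} := by
  obtain ⟨⟨hval, -, hρ, -⟩, m, -, φ₀, hφ₀, hm⟩ := hE
  have hdeg : φ.natDegree ≠ 0 := (hφ₀.natDegree_eq hφ ▸ (Nat.zero_le m).trans_lt hm).ne'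
  ext ψ
  constructor
  · intro hψ
    have hlt : (ψ - φ).natDegree < φ.natDegree :=
      IsMonicOfDegree.natDegree_sub_lt hdeg ⟨hφ.natDegree_eq hψ, hψ.1⟩ ⟨rfl, hφ.1⟩
    obtain ⟨i₀, hi₀⟩ := hφ.isStablePoly_of_natDegree_lt hlt
    have hψ' : ¬ IsStablePoly ρ (φ + (ψ - φ)) := by simpa using hψ.2.1
    exact ⟨ψ - φ, by ring, hlt, ρ i₀ (ψ - φ), ⟨i₀, hi₀⟩,
      (not_isStablePoly_add_iff hval hρ.monotone hφ.2.1 ⟨i₀, hi₀⟩).1 hψ'⟩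
  · rintro ⟨a, rfl, ha, β, hβ, hlt⟩
    exact hφ.add ha ((not_isStablePoly_add_iff hval hρ.monotone hφ.2.1 hβ).2 hlt)

/-- For an essential continuous family `C` and `φ ∈ KP_∞(C)`,
`KP_∞(C) = {φ + a : deg a < m_∞(C), ρ_C(a) > ρ_i(φ) for all i}`. -/
theorem statement_10 {K : Type*} [Field K] {Λ : Type*} [AddCommGroup Λ] [LinearOrder Λ] [IsOrderedAddMonoid Λ] {ι : Type*} [LinearOrder ι] [Nonempty ι]
    (v : FieldVal K Λ) (ρ : ι → Polynomial K → WithTop Λ)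
    (hE : IsEssential v ρ) (φ : Polynomial K) (hφ : IsLimKeyPol ρ φ) :
    {ψ : Polynomial K | IsLimKeyPol ρ ψ} =
      {ψ : Polynomial K | ∃ a : Polynomial K, ψ = φ + a ∧ a.natDegree < φ.natDegree ∧
        ∃ β : WithTop Λ, IsStableVal ρ a β ∧ ∀ i : ι, ρ i φ < β} :=
  statement_10_general v ρ hE φ hφ
end
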